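/- arXiv:1810.00203 — 3 statements merged into one kernel-verified Lean document; each statement's English description precedes it below -/
import Mathlib

section
/- Let q = p^r be an odd prime power with q > 3, and let g be an element of PGL(2,q) of order exactly (q+1)/2 acting on the projective line PL(F_q). Then the cyclic group generated by g has exactly two orbits on PL(F_q), each of size (q+1)/2. -/
/-
A nontrivial Möbius transformation has at most two fixed points: three fixed points give three
pairwise independent eigenvectors of a `2 × 2` matrix, which forces the matrix to be scalar.

Let `σ` be the induced permutation, of order `n = (q + 1) / 2 ≥ 3`. If the `⟨σ⟩`-orbit of a
point has size `d < n`, it is fixed pointwise by `σ ^ d ≠ 1`, so `d ≤ 2`; hence all such points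
are fixed by `σ ^ 2 ≠ 1`, and there are at most two of them. The other points form orbits of
size `n`, so `n` divides their number, and since `n` divides `q + 1 = 2n` it also divides the
number of points in short orbits, which is therefore `0`. So all `2n` points lie in orbits of
size `n`, and there are exactly two orbits.
-/

open Matrix Projectivization
open scoped LinearAlgebra.Projectivization

variable {F : Type*} [Field F]

noncomputable instance glProjAction :
    MulAction (GL (Fin 2) F) (ℙ F (Fin 2 → F)) where
  smul g x := Projectivization.map (Matrix.mulVecLin (g : Matrix (Fin 2) (Fin 2) F))
    ((Matrix.GeneralLinearGroup.toLin g).toLinearEquiv.injective) x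
  one_smul x := by
    show Projectivization.map _ _ x = x
    have h1 : Matrix.mulVecLin ((1 : GL (Fin 2) F) : Matrix (Fin 2) (Fin 2) F)
        = (LinearMap.id : (Fin 2 → F) →ₗ[F] (Fin 2 → F)) := by simp
    simp only [h1, Projectivization.map_id, id_eq]
  mul_smul a b x := by
    show Projectivization.map _ _ x = Projectivization.map _ _ (Projectivization.map _ _ x)
    have h1 : Matrix.mulVecLin ((a * b : GL (Fin 2) F) : Matrix (Fin 2) (Fin 2) F)
        = (Matrix.mulVecLin (a : Matrix (Fin 2) (Fin 2) F)).comp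
            (Matrix.mulVecLin (b : Matrix (Fin 2) (Fin 2) F)) := by
      simp [Matrix.mulVecLin_mul]
    simp only [h1]
    rw [Projectivization.map_comp]
    rfl

/-- The linear fractional (Möbius) action of `GL(2,F)` on the projective line,
as a homomorphism to permutations. -/
noncomputable def mobius : GL (Fin 2) F →* Equiv.Perm (ℙ F (Fin 2 → F)) :=
  MulAction.toPermHom (GL (Fin 2) F) (ℙ F (Fin 2 → F))

namespace MulAction

variable {G α : Type*} [Group G] [MulAction G α]

theorem card_orbit_zpowers (a : G) (b : α) :
    Nat.card (orbit (Subgroup.zpowers a) b) = period a b := by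
  rw [Nat.card_congr (orbitZPowersEquiv a b), Nat.card_zmod, period_eq_minimalPeriod]

theorem period_eq_of_mem_orbit_zpowers {a : G} {x y : α} (h : y ∈ orbit (Subgroup.zpowers a) x) :
    period a y = period a x := by
  rw [← card_orbit_zpowers, ← card_orbit_zpowers, orbit_eq_iff.mpr h]

theorem orbit_zpowers_subset_fixedBy (a : G) (b : α) :
    orbit (Subgroup.zpowers a) b ⊆ fixedBy α (a ^ period a b) := by
  rintro _ ⟨⟨_, j, rfl⟩, rfl⟩
  change a ^ period a b • a ^ j • b = a ^ j • b
  rw [smul_smul, ((Commute.self_zpow a j).pow_left _).eq, mul_smul, pow_period_smul]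

theorem period_le_of_lt_orderOf [Finite α] {a : G} {m : ℕ}
    (hfix : ∀ k : ℕ, a ^ k ≠ 1 → (fixedBy α (a ^ k)).ncard ≤ m) {b : α}
    (hb : period a b < orderOf a) : period a b ≤ m := by
  rcases Nat.eq_zero_or_pos (period a b) with h0 | hpos
  · omega
  calc period a b = (orbit (Subgroup.zpowers a) b).ncard := by
        rw [← Nat.card_coe_set_eq, card_orbit_zpowers]
    _ ≤ (fixedBy α (a ^ period a b)).ncard :=
        Set.ncard_le_ncard (orbit_zpowers_subset_fixedBy a b)
    _ ≤ m := hfix _ (pow_ne_one_of_lt_orderOf hpos.ne' hb)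

theorem ncard_eq_ncard_image_mul_of_card_orbit_eq [Finite α] {s : Set α} {d : ℕ}
    (hs : ∀ x ∈ s, orbit G x ⊆ s) (hd : ∀ x ∈ s, Nat.card (orbit G x) = d) :
    s.ncard = (Quotient.mk (orbitRel G α) '' s).ncard * d := by
  classical
  have := Fintype.ofFinite α
  rw [Set.ncard_eq_toFinset_card', Set.ncard_eq_toFinset_card', Set.toFinset_image,
    Finset.card_eq_sum_card_image (Quotient.mk (orbitRel G α))]
  refine Finset.sum_const_nat fun ω hω => ?_
  obtain ⟨y, hy, rfl⟩ := Finset.mem_image.1 hω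
  rw [Set.mem_toFinset] at hy
  have hfiber : ({x ∈ s.toFinset | Quotient.mk (orbitRel G α) x = Quotient.mk _ y}) =
      (orbit G y).toFinset := by
    ext x
    simp only [Finset.mem_filter, Set.mem_toFinset, Quotient.eq, orbitRel_apply]
    exact ⟨And.right, fun hx => ⟨hs y hy hx, hx⟩⟩
  rw [hfiber, ← Set.ncard_eq_toFinset_card', ← Nat.card_coe_set_eq, hd y hy]

theorem card_eq_card_quotient_mul_of_card_orbit_eq [Finite α] {d : ℕ}
    (hd : ∀ x : α, Nat.card (orbit G x) = d) :
    Nat.card α = Nat.card (orbitRel.Quotient G α) * d := by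
  have := ncard_eq_ncard_image_mul_of_card_orbit_eq (s := Set.univ) (fun _ _ => Set.subset_univ _)
    fun x _ => hd x
  rwa [Set.image_univ_of_surjective Quotient.mk_surjective, Set.ncard_univ, Set.ncard_univ] at this

theorem period_eq_orderOf_of_ncard_fixedBy_le_two [Finite α] {a : G}
    (hfix : ∀ k : ℕ, a ^ k ≠ 1 → (fixedBy α (a ^ k)).ncard ≤ 2) (hord : 2 < orderOf a)
    (hdvd : orderOf a ∣ Nat.card α) (b : α) : period a b = orderOf a := by
  set n := orderOf a
  set long := {x : α | period a x = n}
  have hshort : longᶜ ⊆ fixedBy α (a ^ 2) := by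
    intro x hx
    have hlt : period a x < n :=
      lt_of_le_of_ne (Nat.le_of_dvd (by omega) (period_dvd_orderOf a x)) hx
    have hle := period_le_of_lt_orderOf hfix hlt
    have hpos : 0 < period a x := period_pos_of_orderOf_pos (by omega) x
    exact pow_smul_eq_iff_period_dvd.2 (by interval_cases period a x <;> norm_num)
  have hlong : n ∣ long.ncard := by
    refine Dvd.intro_left _ (ncard_eq_ncard_image_mul_of_card_orbit_eq (G := Subgroup.zpowers a)
      (fun x hx y hy => ?_) (fun x hx => ?_)).symm
    · exact (period_eq_of_mem_orbit_zpowers hy).trans hx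
    · rw [card_orbit_zpowers]; exact hx
  have hshort_lt : longᶜ.ncard < n :=
    calc longᶜ.ncard ≤ (fixedBy α (a ^ 2)).ncard := Set.ncard_le_ncard hshort
      _ ≤ 2 := hfix 2 (pow_ne_one_of_lt_orderOf two_ne_zero hord)
      _ < n := hord
  have hshort_dvd : n ∣ longᶜ.ncard := by
    rw [← Nat.dvd_add_right hlong, Set.ncard_add_ncard_compl]; exact hdvd
  have hshort_empty : longᶜ = ∅ :=
    (Set.ncard_eq_zero).mp (Nat.eq_zero_of_dvd_of_lt hshort_dvd hshort_lt)
  exact Set.eq_univ_iff_forall.mp (Set.compl_empty_iff.mp hshort_empty) b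

end MulAction

theorem LinearMap.eq_smul_id_of_three_eigenvectors {K V : Type*} [Field K] [AddCommGroup V]
    [Module K V] (hV : Module.finrank K V = 2) (f : V →ₗ[K] V) {u v w : V} {a b c : K}
    (huv : LinearIndependent K ![u, v]) (huw : LinearIndependent K ![u, w])
    (hvw : LinearIndependent K ![v, w]) (hu : f u = a • u) (hv : f v = b • v)
    (hw : f w = c • w) : f = c • LinearMap.id := by
  have hspan (x : V) : ∃ s t : K, s • u + t • v = x := by
    rw [← Submodule.mem_span_pair, ← Matrix.range_cons_cons_empty,
      huv.span_eq_top_of_card_eq_finrank (by simp [hV])]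
    trivial
  obtain ⟨s, t, rfl⟩ := hspan w
  have hu0 : u ≠ 0 := by simpa using huv.ne_zero 0
  have hv0 : v ≠ 0 := by simpa using huv.ne_zero 1
  have hs : s ≠ 0 := by
    rintro rfl
    exact (LinearIndependent.pair_iff' hv0).1 hvw t (by simp)
  have ht : t ≠ 0 := by
    rintro rfl
    exact (LinearIndependent.pair_iff' hu0).1 huw s (by simp)
  have hcoeff := LinearIndependent.pair_iff.1 huv (s * (a - c)) (t * (b - c)) (by
    rw [map_add, map_smul, map_smul, hu, hv, smul_add] at hw
    linear_combination (norm := module) hw)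
  have hac : a = c := by
    simpa [hs, sub_eq_zero] using hcoeff.1
  have hbc : b = c := by
    simpa [ht, sub_eq_zero] using hcoeff.2
  ext x
  obtain ⟨s', t', rfl⟩ := hspan x
  simp only [map_add, map_smul, hu, hv, hac, hbc, LinearMap.smul_apply, LinearMap.id_apply]

theorem mobius_mk (g : GL (Fin 2) F) {v : Fin 2 → F} (hv : v ≠ 0)
    (hgv : (g : Matrix (Fin 2) (Fin 2) F) *ᵥ v ≠ 0) :
    mobius g (mk F v hv) = mk F ((g : Matrix (Fin 2) (Fin 2) F) *ᵥ v) hgv :=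
  rfl

theorem mobius_apply_eq_self_iff (g : GL (Fin 2) F) (x : ℙ F (Fin 2 → F)) :
    mobius g x = x ↔ ∃ c : F, (g : Matrix (Fin 2) (Fin 2) F) *ᵥ x.rep = c • x.rep := by
  have hgx : (g : Matrix (Fin 2) (Fin 2) F) *ᵥ x.rep ≠ 0 := fun h => x.rep_nonzero <| by
    have := congrArg (((g⁻¹ : GL (Fin 2) F) : Matrix (Fin 2) (Fin 2) F) *ᵥ ·) h
    rwa [mulVec_mulVec, Units.inv_mul, one_mulVec, mulVec_zero] at this
  conv_lhs => rw [← mk_rep x, mobius_mk g _ hgx, mk_eq_mk_iff']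
  simp only [eq_comm]

theorem mobius_eq_one_of_three_fixed (g : GL (Fin 2) F) {x y z : ℙ F (Fin 2 → F)}
    (hxy : x ≠ y) (hxz : x ≠ z) (hyz : y ≠ z)
    (hx : mobius g x = x) (hy : mobius g y = y) (hz : mobius g z = z) : mobius g = 1 := by
  obtain ⟨a, ha⟩ := (mobius_apply_eq_self_iff g x).1 hx
  obtain ⟨b, hb⟩ := (mobius_apply_eq_self_iff g y).1 hy
  obtain ⟨c, hc⟩ := (mobius_apply_eq_self_iff g z).1 hz
  have hscalar := LinearMap.eq_smul_id_of_three_eigenvectors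
    (f := mulVecLin (g : Matrix (Fin 2) (Fin 2) F)) (by simp)
    (linearIndependent_pair_iff_ne.2 hxy) (linearIndependent_pair_iff_ne.2 hxz)
    (linearIndependent_pair_iff_ne.2 hyz) ha hb hc
  ext w : 1
  rw [Equiv.Perm.one_apply, mobius_apply_eq_self_iff]
  exact ⟨c, LinearMap.congr_fun hscalar w.rep⟩

theorem ncard_fixedBy_mobius_le_two {g : GL (Fin 2) F} (hg : mobius g ≠ 1) :
    (MulAction.fixedBy (ℙ F (Fin 2 → F)) (mobius g)).ncard ≤ 2 := by
  by_contra! h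
  obtain ⟨x, hx, y, hy, z, hz, hxy, hxz, hyz⟩ :=
    (Set.two_lt_ncard (Set.finite_of_ncard_pos (by omega))).1 h
  exact hg (mobius_eq_one_of_three_fixed g hxy hxz hyz hx hy hz)

theorem two_orbits_of_order_half_general
    {F : Type*} [Field F] [Fintype F] {q : ℕ}
    (hodd : Odd q) (hq3 : 3 < q) (hcard : Fintype.card F = q)
    (g : GL (Fin 2) F) (hord : orderOf (mobius g) = (q + 1) / 2) :
    Nat.card (Quotient (MulAction.orbitRel (Subgroup.zpowers (mobius g))
        (ℙ F (Fin 2 → F)))) = 2 ∧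
    ∀ x : ℙ F (Fin 2 → F),
      Nat.card (MulAction.orbit (Subgroup.zpowers (mobius g)) x) = (q + 1) / 2 := by
  set n := (q + 1) / 2
  have hq : q + 1 = 2 * n := by obtain ⟨k, rfl⟩ := hodd; omega
  have hline : Nat.card (ℙ F (Fin 2 → F)) = 2 * n := by
    rw [card_of_finrank_two F (Fin 2 → F) (by simp), Nat.card_eq_fintype_card, hcard, hq]
  have : Finite (ℙ F (Fin 2 → F)) := Nat.finite_of_card_ne_zero (by omega)
  have hfix (m : ℕ) (hm : mobius g ^ m ≠ 1) :
      (MulAction.fixedBy (ℙ F (Fin 2 → F)) (mobius g ^ m)).ncard ≤ 2 := by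
    rw [← map_pow] at hm ⊢
    exact ncard_fixedBy_mobius_le_two hm
  have horbit (x : ℙ F (Fin 2 → F)) :
      Nat.card (MulAction.orbit (Subgroup.zpowers (mobius g)) x) = n := by
    rw [MulAction.card_orbit_zpowers,
      MulAction.period_eq_orderOf_of_ncard_fixedBy_le_two hfix (by omega)
      (by rw [hline, hord]; exact dvd_mul_left n 2), hord]
  refine ⟨?_, horbit⟩
  have hcount := MulAction.card_eq_card_quotient_mul_of_card_orbit_eq horbit
  rw [hline] at hcount
  exact (Nat.eq_of_mul_eq_mul_right (by omega) hcount).symm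

/-- If `g` has order `(q+1)/2` in `PGL(2,q)` (equivalently, the induced
permutation of the projective line has that order), with `q` an odd prime power
bigger than 3, then `⟨g⟩` has exactly two orbits on the projective line, each
of size `(q+1)/2`. -/
theorem two_orbits_of_order_half
    {F : Type*} [Field F] [Fintype F] {p r q : ℕ} (hp : p.Prime) (hq : q = p ^ r)
    (hodd : Odd q) (hq3 : 3 < q) (hcard : Fintype.card F = q)
    (g : GL (Fin 2) F) (hord : orderOf (mobius g) = (q + 1) / 2) :
    Nat.card (Quotient (MulAction.orbitRel (Subgroup.zpowers (mobius g))
        (ℙ F (Fin 2 → F)))) = 2 ∧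
    ∀ x : ℙ F (Fin 2 → F),
      Nat.card (MulAction.orbit (Subgroup.zpowers (mobius g)) x) = (q + 1) / 2 :=
  two_orbits_of_order_half_general hodd hq3 hcard g hord
end

section
/- In PGL(2,31), the transformations x: z ↦ (3z+30)/(10z−3) and y: z ↦ 42/(14z+8) (coefficients mod 31) satisfy x² = 1, y⁴ = 1, and the product xy has order 16 with exactly two orbits on PL(F_31), each of size 16. -/
open Matrix Projectivization
open scoped LinearAlgebra.Projectivization

variable {F : Type*} [Field F]

instance : Fact (Nat.Prime 31) := ⟨by norm_num⟩

/-! ### Auxiliary lemmas -/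

lemma glMulVec_ne_zero (g : GL (Fin 2) F) (v : Fin 2 → F) (hv : v ≠ 0) :
    (g : Matrix (Fin 2) (Fin 2) F) *ᵥ v ≠ 0 := fun h => hv <|
  (Matrix.GeneralLinearGroup.toLin g).toLinearEquiv.injective
    (show Matrix.mulVecLin (g : Matrix (Fin 2) (Fin 2) F) v
        = Matrix.mulVecLin (g : Matrix (Fin 2) (Fin 2) F) 0 by simpa using h)

lemma glSmul_mk (g : GL (Fin 2) F) (v : Fin 2 → F) (hv : v ≠ 0) :
    g • (Projectivization.mk F v hv)
      = Projectivization.mk F ((g : Matrix (Fin 2) (Fin 2) F) *ᵥ v)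
          (glMulVec_ne_zero g v hv) := rfl

lemma mobius_apply (g : GL (Fin 2) F) (x : ℙ F (Fin 2 → F)) : mobius g x = g • x := rfl

lemma mobius_smul (g : GL (Fin 2) F) (x : ℙ F (Fin 2 → F)) : mobius g • x = g • x := rfl

lemma mobius_scalar (g : GL (Fin 2) F) (c : F) (_hc : c ≠ 0)
    (h : (g : Matrix (Fin 2) (Fin 2) F) = c • 1) : mobius g = 1 := by
  ext x
  induction x using Projectivization.ind with
  | h v hv =>
    show g • Projectivization.mk F v hv = Projectivization.mk F v hv
    rw [glSmul_mk, Projectivization.mk_eq_mk_iff']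
    exact ⟨c, by simp [h, Matrix.smul_mulVec]⟩

/-- The key fixed-point-freeness lemma wrapped up generically. -/
lemma orbit_card_of_order16 {α : Type*} (τ : Equiv.Perm α) (hord : orderOf τ = 16)
    (hfix : ∀ x : α, τ ^ 8 • x ≠ x) (x : α) :
    Nat.card (MulAction.orbit (Subgroup.zpowers τ) x) = 16 := by
  have h16 : τ ^ (16 : ℕ) = 1 := by rw [← hord]; exact pow_orderOf_eq_one τ
  -- any natural power fixing a point is a multiple of 16
  have hdvd : ∀ (y : α) (m : ℕ), τ ^ m • y = y → 16 ∣ m := by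
    intro x m hm
    by_contra hnd
    set g := Nat.gcd m 16 with hg
    have hg16 : g ∣ 16 := Nat.gcd_dvd_right m 16
    have hgm : g ∣ m := Nat.gcd_dvd_left m 16
    have hgne : g ≠ 16 := by
      intro h
      exact hnd (h ▸ hgm)
    have hg8 : g ∣ 8 := by
      obtain ⟨k, hk4, hgk⟩ := (Nat.dvd_prime_pow Nat.prime_two).mp
        (show g ∣ 2 ^ 4 by norm_num [hg16])
      have hk4' : k ≠ 4 := by
        intro h
        apply hgne
        rw [hgk, h]
        norm_num
      have hk3 : k ≤ 3 := by omega
      rw [hgk]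
      exact pow_dvd_pow 2 (by omega : k ≤ 3) |>.trans (by norm_num)
    set S := MulAction.stabilizer (Equiv.Perm α) x with hS
    have hmS : τ ^ m ∈ S := hm
    have h16S : τ ^ (16 : ℕ) ∈ S := by rw [h16]; exact one_mem S
    have hgz : τ ^ (g : ℤ) ∈ S := by
      have hb := Nat.gcd_eq_gcd_ab m 16
      rw [← hg] at hb
      rw [show (g : ℤ) = (m : ℤ) * Nat.gcdA m 16 + (16 : ℤ) * Nat.gcdB m 16 from hb,
        _root_.zpow_add, _root_.zpow_mul, _root_.zpow_mul]
      refine S.mul_mem (S.zpow_mem (by rw [zpow_natCast]; exact hmS) _)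
        (S.zpow_mem ?_ _)
      rw [show (16 : ℤ) = ((16 : ℕ) : ℤ) by norm_num, zpow_natCast]
      exact h16S
    have hgS : τ ^ g ∈ S := by rw [← zpow_natCast]; exact hgz
    have h8S : τ ^ (8 : ℕ) ∈ S := by
      rw [← Nat.mul_div_cancel' hg8, pow_mul]
      exact S.pow_mem hgS _
    exact hfix x h8S
  -- the bijection Fin 16 → orbit
  have hmem : ∀ i : ℕ, (τ ^ i) • x ∈ MulAction.orbit (Subgroup.zpowers τ) x := by
    intro i
    exact MulAction.mem_orbit_iff.mpr ⟨⟨τ ^ i, Subgroup.npow_mem_zpowers τ i⟩, rfl⟩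
  let f : Fin 16 → MulAction.orbit (Subgroup.zpowers τ) x :=
    fun i => ⟨(τ ^ (i : ℕ)) • x, hmem i⟩
  have hinj2 : ∀ i j : Fin 16, (i : ℕ) ≤ (j : ℕ) →
      (τ ^ (i : ℕ)) • x = (τ ^ (j : ℕ)) • x → i = j := by
    intro i j hij he
    have h1 : (τ ^ ((j : ℕ) - (i : ℕ))) • ((τ ^ (i : ℕ)) • x) = (τ ^ (i : ℕ)) • x := by
      rw [← mul_smul, ← pow_add,
        show (j : ℕ) - (i : ℕ) + (i : ℕ) = (j : ℕ) by omega]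
      exact he.symm
    have h2 := hdvd _ _ h1
    have : (j : ℕ) - (i : ℕ) = 0 := by omega
    exact Fin.ext (by omega)
  have hbij : Function.Bijective f := by
    constructor
    · intro i j h
      have he : (τ ^ (i : ℕ)) • x = (τ ^ (j : ℕ)) • x := congrArg Subtype.val h
      rcases le_total (i : ℕ) (j : ℕ) with hle | hle
      · exact hinj2 i j hle he
      · exact (hinj2 j i hle he.symm).symm
    · rintro ⟨y, hy⟩
      obtain ⟨gg, hgg⟩ := MulAction.mem_orbit_iff.mp hy
      obtain ⟨k, hk⟩ := Subgroup.mem_zpowers_iff.mp gg.2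
      have hsm : (τ ^ (k : ℤ)) • x = y := by
        rw [hk]
        exact hgg
      have hnn : (0 : ℤ) ≤ k % 16 := Int.emod_nonneg k (by norm_num)
      have hlt : k % 16 < 16 := Int.emod_lt_of_pos k (by norm_num)
      refine ⟨⟨(k % 16).toNat, by omega⟩, ?_⟩
      apply Subtype.ext
      show (τ ^ (((k % 16).toNat : ℕ))) • x = y
      have hpow : τ ^ ((k % 16).toNat : ℕ) = τ ^ (k : ℤ) := by
        rw [← zpow_natCast, Int.toNat_of_nonneg hnn,
          show (16 : ℤ) = ((orderOf τ : ℕ) : ℤ) by rw [hord]; norm_num,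
          zpow_mod_orderOf]
      rw [hpow]
      exact hsm
  rw [← Nat.card_eq_of_bijective f hbij, Nat.card_eq_fintype_card, Fintype.card_fin]

lemma card_proj_line : Nat.card (ℙ (ZMod 31) (Fin 2 → ZMod 31)) = 32 := by
  have h10 : (![1, 0] : Fin 2 → ZMod 31) ≠ 0 := by
    intro h; have := congrFun h 0; simp at this
  have hz1 : ∀ z : ZMod 31, (![z, 1] : Fin 2 → ZMod 31) ≠ 0 := by
    intro z h; have := congrFun h 1; simp at this
  let f : Option (ZMod 31) → ℙ (ZMod 31) (Fin 2 → ZMod 31) := fun o =>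
    match o with
    | none => Projectivization.mk (ZMod 31) ![1, 0] h10
    | some z => Projectivization.mk (ZMod 31) ![z, 1] (hz1 z)
  have hbij : Function.Bijective f := by
    constructor
    · intro a b hab
      match a, b with
      | none, none => rfl
      | none, some w =>
        exfalso
        rw [show f none = Projectivization.mk (ZMod 31) ![1, 0] h10 from rfl,
          show f (some w) = Projectivization.mk (ZMod 31) ![w, 1] (hz1 w) from rfl,
          Projectivization.mk_eq_mk_iff'] at hab
        obtain ⟨c, hc⟩ := hab
        have h0 := congrFun hc 1
        have h0' := congrFun hc 0
        simp at h0 h0'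
        rw [h0, zero_mul] at h0'
        exact zero_ne_one h0'
      | some z, none =>
        exfalso
        rw [show f (some z) = Projectivization.mk (ZMod 31) ![z, 1] (hz1 z) from rfl,
          show f none = Projectivization.mk (ZMod 31) ![1, 0] h10 from rfl,
          Projectivization.mk_eq_mk_iff'] at hab
        obtain ⟨c, hc⟩ := hab
        have h0 := congrFun hc 1
        simp at h0
      | some z, some w =>
        rw [show f (some z) = Projectivization.mk (ZMod 31) ![z, 1] (hz1 z) from rfl,
          show f (some w) = Projectivization.mk (ZMod 31) ![w, 1] (hz1 w) from rfl,
          Projectivization.mk_eq_mk_iff'] at hab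
        obtain ⟨c, hc⟩ := hab
        have h1 := congrFun hc 1
        have h0 := congrFun hc 0
        simp at h1 h0
        rw [h1, one_mul] at h0
        rw [h0]
    · intro x
      induction x using Projectivization.ind with
      | h v hv =>
        by_cases h1 : v 1 = 0
        · have h0 : v 0 ≠ 0 := by
            intro h0
            apply hv
            funext i
            fin_cases i <;> assumption
          refine ⟨none, ?_⟩
          show Projectivization.mk (ZMod 31) ![1, 0] h10 = Projectivization.mk (ZMod 31) v hv
          rw [Projectivization.mk_eq_mk_iff']
          refine ⟨(v 0)⁻¹, ?_⟩
          funext i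
          fin_cases i <;> simp [h1, inv_mul_cancel₀ h0]
        · refine ⟨some (v 0 * (v 1)⁻¹), ?_⟩
          show Projectivization.mk (ZMod 31) ![v 0 * (v 1)⁻¹, 1] _
            = Projectivization.mk (ZMod 31) v hv
          rw [Projectivization.mk_eq_mk_iff']
          refine ⟨(v 1)⁻¹, ?_⟩
          funext i
          fin_cases i <;> simp [inv_mul_cancel₀ h1, mul_comm]
  rw [← Nat.card_eq_of_bijective f hbij, Nat.card_eq_fintype_card]
  simp

instance : Finite (ℙ (ZMod 31) (Fin 2 → ZMod 31)) :=
  Quotient.finite _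

set_option maxHeartbeats 2000000 in
/-- In `PGL(2,31)`, the linear fractional transformations
`x : z ↦ (3z+30)/(10z−3)` and `y : z ↦ 42/(14z+8)` (coefficients mod 31)
satisfy `x² = 1`, `y⁴ = 1`, and `xy` has order 16 with exactly two orbits on
the projective line over `F₃₁`, each of size 16. -/
theorem januarial_example_p31 :
    ∀ (X Y : GL (Fin 2) (ZMod 31)),
      (X : Matrix (Fin 2) (Fin 2) (ZMod 31)) = !![3, 30; 10, -3] →
      (Y : Matrix (Fin 2) (Fin 2) (ZMod 31)) = !![0, 42; 14, 8] →
      (mobius X) ^ 2 = 1 ∧ (mobius Y) ^ 4 = 1 ∧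
      orderOf (mobius (X * Y)) = 16 ∧
      Nat.card (Quotient (MulAction.orbitRel
        (Subgroup.zpowers (mobius (X * Y))) (ℙ (ZMod 31) (Fin 2 → ZMod 31)))) = 2 ∧
      ∀ x : ℙ (ZMod 31) (Fin 2 → ZMod 31),
        Nat.card (MulAction.orbit (Subgroup.zpowers (mobius (X * Y))) x) = 16 := by
  intro X Y hX hY
  have h30 : (30 : ZMod 31) ≠ 0 := by decide
  -- x² = 1
  have hx2 : (mobius X) ^ 2 = 1 := by
    rw [← map_pow]
    apply mobius_scalar _ 30 h30
    rw [Units.val_pow_eq_pow_val, hX]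
    decide
  -- y⁴ = 1
  have hy4 : (mobius Y) ^ 4 = 1 := by
    rw [← map_pow]
    apply mobius_scalar _ 30 h30
    rw [Units.val_pow_eq_pow_val, hY]
    decide
  set τ := mobius (X * Y) with hτ
  have hτ16 : τ ^ 16 = 1 := by
    rw [hτ, ← map_pow]
    apply mobius_scalar _ 30 h30
    rw [Units.val_pow_eq_pow_val, Units.val_mul, hX, hY]
    decide
  -- matrix of (X*Y)^8
  have hM8 : (((X * Y) ^ 8 : GL (Fin 2) (ZMod 31)) : Matrix (Fin 2) (Fin 2) (ZMod 31))
      = !![5, 13; 29, 26] := by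
    rw [Units.val_pow_eq_pow_val, Units.val_mul, hX, hY]
    decide
  -- fixed point freeness of τ^8
  have hfix : ∀ x : ℙ (ZMod 31) (Fin 2 → ZMod 31), τ ^ 8 • x ≠ x := by
    intro x hfx
    induction x using Projectivization.ind with
    | h v hv =>
      have : ((X * Y) ^ 8 : GL (Fin 2) (ZMod 31)) • Projectivization.mk (ZMod 31) v hv
          = Projectivization.mk (ZMod 31) v hv := by
        rw [← map_pow] at hfx
        exact hfx
      rw [glSmul_mk, Projectivization.mk_eq_mk_iff'] at this
      rw [hM8] at this
      obtain ⟨a, ha⟩ := this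
      have e0 := congrFun ha 0
      have e1 := congrFun ha 1
      simp [Matrix.mulVec, dotProduct, Fin.sum_univ_two] at e0 e1
      have key : ∀ p q : ZMod 31, 13*q*q = 29*p*p + 21*p*q → (p = 0 ∧ q = 0) := by decide
      have hq : 13 * v 1 * v 1 = 29 * v 0 * v 0 + 21 * v 0 * v 1 := by
        linear_combination (v 0) * e1 - (v 1) * e0
      obtain ⟨hp0, hq0⟩ := key _ _ hq
      apply hv
      funext i
      fin_cases i <;> assumption
  -- order of τ
  have hord : orderOf τ = 16 := by
    have h8 : τ ^ 8 ≠ 1 := by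
      intro h
      apply hfix (Projectivization.mk (ZMod 31) ![1, 0]
        (by intro h'; have := congrFun h' 0; simp at this))
      rw [h]
      rfl
    have := orderOf_eq_prime_pow (p := 2) (n := 3) (x := τ)
      (by norm_num; exact h8) (by norm_num; exact hτ16)
    simpa using this
  -- orbit sizes
  have horb : ∀ x : ℙ (ZMod 31) (Fin 2 → ZMod 31),
      Nat.card (MulAction.orbit (Subgroup.zpowers τ) x) = 16 :=
    orbit_card_of_order16 τ hord hfix
  refine ⟨hx2, hy4, hord, ?_, horb⟩
  -- number of orbits
  letI : Fintype (Quotient (MulAction.orbitRel (Subgroup.zpowers τ)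
      (ℙ (ZMod 31) (Fin 2 → ZMod 31)))) := Fintype.ofFinite _
  letI : ∀ ω : MulAction.orbitRel.Quotient (Subgroup.zpowers τ)
      (ℙ (ZMod 31) (Fin 2 → ZMod 31)),
      Fintype (MulAction.orbit (Subgroup.zpowers τ) ω.out) := fun _ => Fintype.ofFinite _
  have hcard := card_proj_line
  have hequiv := MulAction.selfEquivSigmaOrbits (Subgroup.zpowers τ)
    (ℙ (ZMod 31) (Fin 2 → ZMod 31))
  have h32 : 32 = ∑ ω : MulAction.orbitRel.Quotient (Subgroup.zpowers τ)
      (ℙ (ZMod 31) (Fin 2 → ZMod 31)),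
      Fintype.card (MulAction.orbit (Subgroup.zpowers τ) ω.out) := by
    rw [← Fintype.card_sigma, ← Nat.card_eq_fintype_card, ← Nat.card_congr hequiv, hcard]
  have hconst : ∀ ω : MulAction.orbitRel.Quotient (Subgroup.zpowers τ)
      (ℙ (ZMod 31) (Fin 2 → ZMod 31)),
      Fintype.card (MulAction.orbit (Subgroup.zpowers τ) ω.out) = 16 := by
    intro ω
    rw [← Nat.card_eq_fintype_card]
    exact horb _
  rw [Finset.sum_congr rfl (fun ω _ => hconst ω), Finset.sum_const, Finset.card_univ,
    smul_eq_mul] at h32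
  rw [← Nat.card_eq_fintype_card] at h32
  have h2 : Nat.card (MulAction.orbitRel.Quotient (Subgroup.zpowers τ)
      (ℙ (ZMod 31) (Fin 2 → ZMod 31))) = 2 := by omega
  exact h2
end

section
/- Let M be a 2×2 matrix over a field with trace r and determinant Δ ≠ 0. Then M^k is a scalar multiple of the identity matrix if and only if a_k(r, Δ) = 0, where a_k = Σ_{j≥0} (−1)^j C(k−1−j, j) r^{k−1−2j} Δ^j, provided M itself is not a scalar matrix. -/
/-!
By Cayley–Hamilton, `M ^ 2 = r • M - Δ • 1`, so by induction
`M ^ (n + 1) = U (n + 1) • M - (Δ * U n) • 1`, where `U` is the Lucas sequence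
`U 0 = 0, U 1 = 1, U (n + 2) = r * U (n + 1) - Δ * U n`. Pascal's rule shows that `U k` is the
binomial sum `a_k`. As `M` is not scalar, `1` and `M` are linearly independent, so `M ^ k` is
scalar exactly when the coefficient `U k` of `M` vanishes.
-/

open Finset

section LucasSequence

variable {R : Type*} [CommRing R]

def lucasU (P Q : R) : ℕ → R
  | 0 => 0
  | 1 => 1
  | n + 2 => P * lucasU P Q (n + 1) - Q * lucasU P Q n

theorem lucasU_sum_term_pascal (P Q : R) {k j : ℕ} (hj : j < k) :
    (-1 : R) ^ (j + 1) * ((k + 2 - 1 - (j + 1)).choose (j + 1) : R) *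
        P ^ (k + 2 - 1 - 2 * (j + 1)) * Q ^ (j + 1) =
      P * ((-1 : R) ^ (j + 1) * ((k + 1 - 1 - (j + 1)).choose (j + 1) : R) *
        P ^ (k + 1 - 1 - 2 * (j + 1)) * Q ^ (j + 1)) -
      Q * ((-1 : R) ^ j * ((k - 1 - j).choose j : R) * P ^ (k - 1 - 2 * j) * Q ^ j) := by
  obtain ⟨m, rfl⟩ : ∃ m, k = j + 1 + m := ⟨k - j - 1, by omega⟩
  have h₁ : j + 1 + m + 2 - 1 - (j + 1) = m + 1 := by omega
  have h₂ : j + 1 + m + 1 - 1 - (j + 1) = m := by omega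
  have h₃ : j + 1 + m - 1 - j = m := by omega
  have h₄ : j + 1 + m + 2 - 1 - 2 * (j + 1) = m - j := by omega
  have h₅ : j + 1 + m - 1 - 2 * j = m - j := by omega
  rw [h₁, h₂, h₃, h₄, h₅, Nat.choose_succ_succ', Nat.cast_add]
  rcases lt_or_ge j m with hjm | hmj
  · rw [show m - j = (j + 1 + m + 1 - 1 - 2 * (j + 1)) + 1 by omega, pow_succ]
    ring
  · rw [Nat.choose_eq_zero_of_lt (by omega : m < j + 1)]
    ring

theorem lucasU_eq_sum (P Q : R) (k : ℕ) :
    lucasU P Q k =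
      ∑ j ∈ range k, (-1 : R) ^ j * ((k - 1 - j).choose j : R) * P ^ (k - 1 - 2 * j) * Q ^ j := by
  induction k using Nat.strong_induction_on with
  | _ k ih =>
  match k with
  | 0 => simp [lucasU]
  | 1 => simp [lucasU]
  | k + 2 =>
    rw [lucasU, ih (k + 1) (by omega), ih k (by omega), sum_range_succ', sum_range_succ,
      sum_range_succ' _ k, sum_congr rfl fun j hj => lucasU_sum_term_pascal P Q (mem_range.1 hj),
      sum_sub_distrib, ← mul_sum, ← mul_sum,
      Nat.choose_eq_zero_of_lt (by omega : k + 2 - 1 - (k + 1) < k + 1)]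
    simp only [Nat.choose_zero_right, Nat.sub_zero, Nat.add_sub_cancel,
      show k + 2 - 1 = k + 1 by omega, Nat.cast_one, pow_zero, mul_one, one_mul, Nat.cast_zero,
      mul_zero, zero_mul]
    ring

theorem pow_succ_eq_lucasU {A : Type*} [Ring A] [Algebra R A] {x : A} {P Q : R}
    (hx : x ^ 2 = P • x - Q • 1) (n : ℕ) :
    x ^ (n + 1) = lucasU P Q (n + 1) • x - (Q * lucasU P Q n) • 1 := by
  induction n with
  | zero => simp [lucasU]
  | succ n ih =>
    rw [pow_succ, ih, sub_mul, smul_mul_assoc, smul_mul_assoc, ← sq, hx, one_mul, lucasU]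
    module

theorem Matrix.cayley_hamilton_fin_two (M : Matrix (Fin 2) (Fin 2) R) :
    M ^ 2 = M.trace • M - M.det • 1 := by
  ext i j
  fin_cases i <;> fin_cases j <;>
    simp [sq, Matrix.mul_apply, Matrix.trace_fin_two, Matrix.det_fin_two] <;> ring

end LucasSequence

theorem exists_smul_sub_eq_smul_one_iff {K A : Type*} [Field K] [Ring A] [Algebra K A] {x : A}
    (hx : ¬∃ c : K, x = c • 1) (a b : K) :
    (∃ c : K, a • x - b • (1 : A) = c • 1) ↔ a = 0 := by
  refine ⟨fun ⟨c, hc⟩ => ?_, fun ha => ⟨-b, by simp [ha]⟩⟩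
  by_contra ha
  refine hx ⟨a⁻¹ * (c + b), ?_⟩
  rw [mul_smul, add_smul, ← hc, sub_add_cancel, inv_smul_smul₀ ha]

theorem power_scalar_iff_general {K : Type*} [Field K]
    (M : Matrix (Fin 2) (Fin 2) K) (r Δ : K) (hr : r = M.trace) (hΔ : Δ = M.det)
    (hM : ¬∃ c : K, M = c • (1 : Matrix (Fin 2) (Fin 2) K)) :
    ∀ k : ℕ, 1 ≤ k →
      ((∃ c : K, M ^ k = c • (1 : Matrix (Fin 2) (Fin 2) K)) ↔
        (∑ j ∈ Finset.range k,
            (-1 : K) ^ j * ((k - 1 - j).choose j : K) * r ^ (k - 1 - 2 * j) * Δ ^ j)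
          = 0) := by
  intro k hk
  obtain ⟨n, rfl⟩ : ∃ n, k = n + 1 := ⟨k - 1, by omega⟩
  have hsq : M ^ 2 = r • M - Δ • 1 := hr ▸ hΔ ▸ M.cayley_hamilton_fin_two
  rw [pow_succ_eq_lucasU hsq, ← lucasU_eq_sum]
  exact exists_smul_sub_eq_smul_one_iff hM _ _

/-- Let `M` be a 2×2 matrix over a field with trace `r` and determinant
`Δ ≠ 0`, and suppose `M` is not a scalar matrix. Then for `k ≥ 1`, `M^k` is a
scalar multiple of the identity iff `a_k(r, Δ) = 0`, where
`a_k = Σ_j (−1)^j C(k−1−j, j) r^{k−1−2j} Δ^j`. -/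
theorem power_scalar_iff {K : Type*} [Field K]
    (M : Matrix (Fin 2) (Fin 2) K) (r Δ : K) (hr : r = M.trace) (hΔ : Δ = M.det)
    (hΔ0 : Δ ≠ 0) (hM : ¬∃ c : K, M = c • (1 : Matrix (Fin 2) (Fin 2) K)) :
    ∀ k : ℕ, 1 ≤ k →
      ((∃ c : K, M ^ k = c • (1 : Matrix (Fin 2) (Fin 2) K)) ↔
        (∑ j ∈ Finset.range k,
            (-1 : K) ^ j * ((k - 1 - j).choose j : K) * r ^ (k - 1 - 2 * j) * Δ ^ j)
          = 0) :=
  power_scalar_iff_general M r Δ hr hΔ hM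
end
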